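/- Let α > 1 be real, let p₁,…,p_{n₁} ≥ 0 and q₁,…,q_{n₂} ≥ 0, and set ρ^A = diag(p₁,…,p_{n₁}), ρ^B = diag(q₁,…,q_{n₂}), x^A = diag(√p₁,…,√p_{n₁}). Then for every n₂×n₂ complex matrix w, Φ±_{ρ^A ⊗ ρ^B}(x^A ⊗ w) = (x^A)^{2α−1} ⊗ Φ±_{ρ^B}(w) (for both the + and − maps), where (x^A)^{2α−1} = diag(p₁^{α−1/2},…,p_{n₁}^{α−1/2}) and ρ^A ⊗ ρ^B is the diagonal matrix with entries p_j q_k. -/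
import Mathlib


open Matrix Kronecker

lemma key_minus (α : ℝ) (hα : 1 < α) {r q1 q2 : ℝ} (hr : 0 ≤ r) (hq1 : 0 ≤ q1)
    (hq2 : 0 ≤ q2) :
    (if r * q1 = r * q2 then (2 * α - 1) * (r * q1) ^ (α - 1)
      else ((r * q1) ^ (α - 1 / 2) - (r * q2) ^ (α - 1 / 2)) /
        ((r * q1) ^ ((1 : ℝ) / 2) - (r * q2) ^ ((1 : ℝ) / 2))) * Real.sqrt r =
    r ^ (α - 1 / 2) * (if q1 = q2 then (2 * α - 1) * q1 ^ (α - 1)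
      else (q1 ^ (α - 1 / 2) - q2 ^ (α - 1 / 2)) /
        (q1 ^ ((1 : ℝ) / 2) - q2 ^ ((1 : ℝ) / 2))) := by
  rcases hr.eq_or_lt with h0 | hr'
  · have h1 : α - 1 / 2 ≠ 0 := ne_of_gt (by linarith)
    have h2 : α - 2⁻¹ ≠ 0 := ne_of_gt (by linarith)
    simp only [← h0, zero_mul, if_pos rfl, Real.zero_rpow h1, mul_zero, Real.sqrt_zero]
  · by_cases hq : q1 = q2
    · subst hq
      rw [if_pos rfl, if_pos rfl, Real.mul_rpow hr hq1, Real.sqrt_eq_rpow,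
        show (2 * α - 1) * (r ^ (α - 1) * q1 ^ (α - 1)) * r ^ ((1:ℝ) / 2)
          = r ^ (α - 1) * r ^ ((1:ℝ) / 2) * ((2 * α - 1) * q1 ^ (α - 1)) from by ring,
        ← Real.rpow_add hr', show α - 1 + (1:ℝ)/2 = α - 1/2 from by ring]
    · have hB : q1 ^ ((1:ℝ)/2) - q2 ^ ((1:ℝ)/2) ≠ 0 := by
        rw [sub_ne_zero, ← Real.sqrt_eq_rpow, ← Real.sqrt_eq_rpow]
        exact fun h => hq ((Real.sqrt_inj hq1 hq2).mp h)
      have hc : r ^ ((1:ℝ)/2) ≠ 0 := ne_of_gt (Real.rpow_pos_of_pos hr' _)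
      rw [if_neg (fun h => hq (mul_left_cancel₀ (ne_of_gt hr') h)), if_neg hq,
        Real.mul_rpow hr hq1, Real.mul_rpow hr hq2, Real.mul_rpow hr hq1,
        Real.mul_rpow hr hq2, Real.sqrt_eq_rpow,
        show r ^ ((1:ℝ)/2) * q1 ^ ((1:ℝ)/2) - r ^ ((1:ℝ)/2) * q2 ^ ((1:ℝ)/2)
          = r ^ ((1:ℝ)/2) * (q1 ^ ((1:ℝ)/2) - q2 ^ ((1:ℝ)/2)) from by ring]
      field_simp

lemma key_plus (α : ℝ) (hα : 1 < α) {r q1 q2 : ℝ} (hr : 0 ≤ r) (hq1 : 0 ≤ q1)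
    (hq2 : 0 ≤ q2) :
    (if r * q1 = r * q2 then (r * q1) ^ (α - 1)
      else ((r * q1) ^ (α - 1 / 2) + (r * q2) ^ (α - 1 / 2)) /
        ((r * q1) ^ ((1 : ℝ) / 2) + (r * q2) ^ ((1 : ℝ) / 2))) * Real.sqrt r =
    r ^ (α - 1 / 2) * (if q1 = q2 then q1 ^ (α - 1)
      else (q1 ^ (α - 1 / 2) + q2 ^ (α - 1 / 2)) /
        (q1 ^ ((1 : ℝ) / 2) + q2 ^ ((1 : ℝ) / 2))) := by
  rcases hr.eq_or_lt with h0 | hr'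
  · have h1 : α - 1 / 2 ≠ 0 := ne_of_gt (by linarith)
    have h2 : α - 2⁻¹ ≠ 0 := ne_of_gt (by linarith)
    simp only [← h0, zero_mul, if_pos rfl, Real.zero_rpow h1, mul_zero, Real.sqrt_zero]
  · by_cases hq : q1 = q2
    · subst hq
      rw [if_pos rfl, if_pos rfl, Real.mul_rpow hr hq1, Real.sqrt_eq_rpow,
        show r ^ (α - 1) * q1 ^ (α - 1) * r ^ ((1:ℝ) / 2)
          = r ^ (α - 1) * r ^ ((1:ℝ) / 2) * q1 ^ (α - 1) from by ring,
        ← Real.rpow_add hr', show α - 1 + (1:ℝ)/2 = α - 1/2 from by ring]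
    · have hB : q1 ^ ((1:ℝ)/2) + q2 ^ ((1:ℝ)/2) ≠ 0 := by
        rcases lt_or_ge 0 q1 with h | h
        · exact ne_of_gt (add_pos_of_pos_of_nonneg (Real.rpow_pos_of_pos h _)
            (Real.rpow_nonneg hq2 _))
        · have hq1' : q1 = 0 := le_antisymm h hq1
          have : 0 < q2 := lt_of_le_of_ne hq2 (fun h2 => hq (by rw [hq1', ← h2]))
          exact ne_of_gt (add_pos_of_nonneg_of_pos (Real.rpow_nonneg hq1 _)
            (Real.rpow_pos_of_pos this _))
      have hc : r ^ ((1:ℝ)/2) ≠ 0 := ne_of_gt (Real.rpow_pos_of_pos hr' _)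
      rw [if_neg (fun h => hq (mul_left_cancel₀ (ne_of_gt hr') h)), if_neg hq,
        Real.mul_rpow hr hq1, Real.mul_rpow hr hq2, Real.mul_rpow hr hq1,
        Real.mul_rpow hr hq2, Real.sqrt_eq_rpow,
        show r ^ ((1:ℝ)/2) * q1 ^ ((1:ℝ)/2) + r ^ ((1:ℝ)/2) * q2 ^ ((1:ℝ)/2)
          = r ^ ((1:ℝ)/2) * (q1 ^ ((1:ℝ)/2) + q2 ^ ((1:ℝ)/2)) from by ring]
      field_simp



/-- The Hadamard coefficients `φ⁻_{jk} = (p_j^{α-1/2} - p_k^{α-1/2})/(p_j^{1/2} - p_k^{1/2})`,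
with the convention `φ⁻_{jk} = (2α-1) p_j^{α-1}` when `p_j = p_k`. -/
noncomputable def phiMinus (α : ℝ) {m : Type*} (p : m → ℝ) (j k : m) : ℝ :=
  if p j = p k then (2 * α - 1) * p j ^ (α - 1)
  else (p j ^ (α - 1 / 2) - p k ^ (α - 1 / 2)) / (p j ^ ((1 : ℝ) / 2) - p k ^ ((1 : ℝ) / 2))

/-- The Hadamard coefficients `φ⁺_{jk} = (p_j^{α-1/2} + p_k^{α-1/2})/(p_j^{1/2} + p_k^{1/2})`,
with the convention `φ⁺_{jk} = p_j^{α-1}` when `p_j = p_k` (so `φ⁺_{jk} = 0` when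
`p_j = p_k = 0`, since `0^{α-1} = 0` for `α > 1`). -/
noncomputable def phiPlus (α : ℝ) {m : Type*} (p : m → ℝ) (j k : m) : ℝ :=
  if p j = p k then p j ^ (α - 1)
  else (p j ^ (α - 1 / 2) + p k ^ (α - 1 / 2)) / (p j ^ ((1 : ℝ) / 2) + p k ^ ((1 : ℝ) / 2))

/-- The Hadamard multiplier map `Φ⁻_ρ` for `ρ = diag(p)`. -/
noncomputable def PhiMinus (α : ℝ) {m : Type*} (p : m → ℝ)
    (y : Matrix m m ℂ) : Matrix m m ℂ :=
  Matrix.of fun j k => (phiMinus α p j k : ℂ) * y j k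

/-- The Hadamard multiplier map `Φ⁺_ρ` for `ρ = diag(p)`. -/
noncomputable def PhiPlus (α : ℝ) {m : Type*} (p : m → ℝ)
    (y : Matrix m m ℂ) : Matrix m m ℂ :=
  Matrix.of fun j k => (phiPlus α p j k : ℂ) * y j k

/-- For `ρ^A = diag(p)`, `ρ^B = diag(q)` and `x^A = diag(√p)`,
one has `Φ±_{ρ^A ⊗ ρ^B}(x^A ⊗ w) = (x^A)^{2α−1} ⊗ Φ±_{ρ^B}(w)` for every matrix `w`,
where `(x^A)^{2α−1} = diag(p_j^{α−1/2})` and `ρ^A ⊗ ρ^B` is diagonal with entries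
`p_j q_k`. -/
theorem phi_tensor_diagonal {n₁ n₂ : ℕ} (α : ℝ) (hα : 1 < α)
    (p : Fin n₁ → ℝ) (q : Fin n₂ → ℝ)
    (hp : ∀ j, 0 ≤ p j) (hq : ∀ k, 0 ≤ q k)
    (w : Matrix (Fin n₂) (Fin n₂) ℂ) :
    PhiMinus α (fun jk : Fin n₁ × Fin n₂ => p jk.1 * q jk.2)
        ((Matrix.diagonal fun j => (Real.sqrt (p j) : ℂ)) ⊗ₖ w) =
      (Matrix.diagonal fun j => ((p j ^ (α - 1 / 2) : ℝ) : ℂ)) ⊗ₖ PhiMinus α q w ∧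
    PhiPlus α (fun jk : Fin n₁ × Fin n₂ => p jk.1 * q jk.2)
        ((Matrix.diagonal fun j => (Real.sqrt (p j) : ℂ)) ⊗ₖ w) =
      (Matrix.diagonal fun j => ((p j ^ (α - 1 / 2) : ℝ) : ℂ)) ⊗ₖ PhiPlus α q w := by
  constructor
  · ext jk1 jk2
    obtain ⟨j1, k1⟩ := jk1
    obtain ⟨j2, k2⟩ := jk2
    simp only [PhiMinus, Matrix.of_apply, Matrix.kroneckerMap_apply]
    by_cases hj : j1 = j2
    · subst hj
      simp only [Matrix.diagonal_apply_eq, phiMinus]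
      rw [← mul_assoc, ← mul_assoc]
      congr 1
      exact_mod_cast key_minus α hα (hp j1) (hq k1) (hq k2)
    · simp [Matrix.diagonal_apply_ne _ hj]
  · ext jk1 jk2
    obtain ⟨j1, k1⟩ := jk1
    obtain ⟨j2, k2⟩ := jk2
    simp only [PhiPlus, Matrix.of_apply, Matrix.kroneckerMap_apply]
    by_cases hj : j1 = j2
    · subst hj
      simp only [Matrix.diagonal_apply_eq, phiPlus]
      rw [← mul_assoc, ← mul_assoc]
      congr 1
      exact_mod_cast key_plus α hα (hp j1) (hq k1) (hq k2)
    · simp [Matrix.diagonal_apply_ne _ hj]
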